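/- If s and r are involutions in a group and the product s·r has odd order, then s and r are conjugate in the subgroup generated by s and r. -/
import Mathlib


/-- Two involutions whose product has odd order are conjugate in the
subgroup they generate. -/
theorem involutions_conjugate_of_odd_order_product {G : Type*} [Group G] (s r : G)
    (hs : s ^ 2 = 1) (hr : r ^ 2 = 1) (hodd : Odd (orderOf (s * r))) :
    ∃ x ∈ Subgroup.closure {s, r}, x⁻¹ * s * x = r := by
  obtain ⟨k, hk⟩ := hodd
  set a := s * r with ha
  have hs1 : s⁻¹ = s := inv_eq_of_mul_eq_one_left (by rw [← pow_two]; exact hs)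
  have hr1 : r⁻¹ = r := inv_eq_of_mul_eq_one_left (by rw [← pow_two]; exact hr)
  refine ⟨a ^ (k + 1), ?_, ?_⟩
  · exact pow_mem (mul_mem (Subgroup.subset_closure (by simp))
      (Subgroup.subset_closure (by simp))) _
  · have hconj : s * a * s⁻¹ = a⁻¹ := by
      rw [hs1, ha, mul_inv_rev, hs1, hr1,
        show s * (s * r) * s = s * s * (r * s) by group, ← pow_two, hs, one_mul]
    have hpow : s * a ^ (k + 1) * s⁻¹ = (a ^ (k + 1))⁻¹ := by
      rw [← conj_pow, hconj, inv_pow]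
    have key : (a ^ (k + 1))⁻¹ * s = s * a ^ (k + 1) := by
      rw [← hpow, mul_assoc, inv_mul_cancel, mul_one]
    rw [key, mul_assoc, ← pow_add]
    have h2 : k + 1 + (k + 1) = orderOf a + 1 := by omega
    rw [h2, pow_succ, pow_orderOf_eq_one, one_mul, ha, ← mul_assoc, ← pow_two, hs, one_mul]
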